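/- arXiv:1402.5366 — 5 statements merged into one kernel-verified Lean document; each statement's English description precedes it below -/
import Mathlib

section
/- For all A, B > 0, the integral from 0 to infinity of Γ(-1/2, 4πAy)·e^{-4πBy} dy equals (1/(2√π·B))·(√(1 + B/A) − 1), where Γ(s,x) denotes the upper incomplete gamma function. -/
/-!
Writing `Γ(s, a y)` as an integral over `t > a y` and exchanging the order of integration, the
inner integral over `0 < y < t / a` is elementary and the left side becomes
`(1 / b) ∫₀^∞ t^(s-1) (e^(-t) - e^(-c t)) dt` with `c = 1 + b / a`. Since
`e^(-p t) - e^(-q t) = ∫_p^q t e^(-r t) dr`, a second exchange reduces this to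
`∫_p^q Γ(s + 1) r^(-s-1) dr = Γ(s) (p^(-s) - q^(-s))`. At `s = -1/2`, `Γ(-1/2) = -2 √π`.
-/

/-- The upper incomplete gamma function `Γ(s, x) = ∫_x^∞ t^(s-1) e^(-t) dt`. -/
noncomputable def upperIncompleteGamma (s x : ℝ) : ℝ :=
  ∫ t in Set.Ioi x, t ^ (s - 1) * Real.exp (-t)

open MeasureTheory Set Real

theorem Real.Gamma_neg_one_half : Gamma (-1 / 2) = -2 * √π := by
  have h := Gamma_add_one (s := -1 / 2) (by norm_num)
  rw [show (-1 / 2 : ℝ) + 1 = 1 / 2 by norm_num, Gamma_one_half_eq] at h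
  linarith

theorem intervalIntegral.integral_exp_neg_mul {c : ℝ} (hc : c ≠ 0) (α β : ℝ) :
    ∫ x in α..β, exp (-(c * x)) = (exp (-(c * α)) - exp (-(c * β))) / c := by
  have h := intervalIntegral.integral_comp_mul_left (a := α) (b := β) exp (c := -c)
    (neg_ne_zero.2 hc)
  simp only [neg_mul, integral_exp, smul_eq_mul] at h
  rw [h]
  field_simp
  ring

theorem intervalIntegral.integral_mul_exp_neg_mul_eq_sub (p q t : ℝ) :
    ∫ r in p..q, t * exp (-(r * t)) = exp (-(p * t)) - exp (-(q * t)) := by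
  rcases eq_or_ne t 0 with rfl | ht
  · simp
  simp_rw [intervalIntegral.integral_const_mul, mul_comm _ t,
    intervalIntegral.integral_exp_neg_mul ht]
  field_simp

section GammaDifference

variable {s p q : ℝ}

theorem rpow_sub_one_mul_exp_neg_sub_eq_integral_Ioc {t : ℝ} (ht : 0 < t) (hpq : p ≤ q) :
    t ^ (s - 1) * (exp (-(p * t)) - exp (-(q * t))) = ∫ r in Ioc p q, t ^ s * exp (-(r * t)) := by
  rw [← intervalIntegral.integral_of_le hpq, ← intervalIntegral.integral_mul_exp_neg_mul_eq_sub,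
    ← intervalIntegral.integral_const_mul]
  congr 1 with r
  rw [← mul_assoc, ← rpow_add_one ht.ne', sub_add_cancel]

theorem integrable_rpow_mul_exp_neg_mul_prod (hs : -1 < s) (hp : 0 < p) :
    Integrable (Function.uncurry fun r t : ℝ ↦ t ^ s * exp (-(r * t)))
      ((volume.restrict (Ioc p q)).prod (volume.restrict (Ioi 0))) := by
  have hbound : IntegrableOn (fun t ↦ t ^ s * exp (-(p * t))) (Ioi 0) := by
    simpa using integrableOn_rpow_mul_exp_neg_mul_rpow (p := 1) hs one_pos hp
  refine (hbound.comp_snd _).mono' (by fun_prop) ?_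
  rw [Measure.prod_restrict]
  filter_upwards [ae_restrict_mem (measurableSet_Ioc.prod measurableSet_Ioi)] with x ⟨hr, ht⟩
  have ht : 0 < x.2 := ht
  rw [Function.uncurry_apply_pair, norm_of_nonneg (by positivity)]
  gcongr
  exact hr.1.le

theorem integrableOn_rpow_sub_one_mul_exp_neg_sub (hs : -1 < s) (hp : 0 < p) (hpq : p ≤ q) :
    IntegrableOn (fun t ↦ t ^ (s - 1) * (exp (-(p * t)) - exp (-(q * t)))) (Ioi 0) := by
  have hK := integrable_rpow_mul_exp_neg_mul_prod (q := q) hs hp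
  refine IntegrableOn.congr_fun ((integrable_prod_iff' hK.aestronglyMeasurable).1 hK).2
    (fun t ht ↦ ?_) measurableSet_Ioi
  have ht : 0 < t := ht
  rw [rpow_sub_one_mul_exp_neg_sub_eq_integral_Ioc ht hpq]
  refine setIntegral_congr_fun measurableSet_Ioc fun r _ ↦ norm_of_nonneg ?_
  rw [Function.uncurry_apply_pair]
  positivity

theorem integral_rpow_sub_one_mul_exp_neg_sub (hs : -1 < s) (hs0 : s ≠ 0) (hp : 0 < p)
    (hpq : p ≤ q) :
    ∫ t in Ioi 0, t ^ (s - 1) * (exp (-(p * t)) - exp (-(q * t)))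
      = Gamma s * (p ^ (-s) - q ^ (-s)) := by
  calc ∫ t in Ioi 0, t ^ (s - 1) * (exp (-(p * t)) - exp (-(q * t)))
      = ∫ t in Ioi 0, ∫ r in Ioc p q, t ^ s * exp (-(r * t)) :=
        setIntegral_congr_fun measurableSet_Ioi fun _ ht ↦
          rpow_sub_one_mul_exp_neg_sub_eq_integral_Ioc ht hpq
    _ = ∫ r in Ioc p q, ∫ t in Ioi 0, t ^ s * exp (-(r * t)) :=
        (integral_integral_swap (integrable_rpow_mul_exp_neg_mul_prod hs hp)).symm
    _ = ∫ r in Ioc p q, Gamma (s + 1) * r ^ (-(s + 1)) := by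
        refine setIntegral_congr_fun measurableSet_Ioc fun r hr ↦ ?_
        have hr : 0 < r := hp.trans hr.1
        have h := integral_rpow_mul_exp_neg_mul_Ioi (a := s + 1) (by linarith) hr
        rw [add_sub_cancel_right] at h
        rw [h, one_div, inv_rpow hr.le, ← rpow_neg hr.le, mul_comm]
    _ = Gamma s * (p ^ (-s) - q ^ (-s)) := by
        have hp0 : (0 : ℝ) ∉ uIcc p q := by
          rw [uIcc_of_le hpq]
          exact fun h ↦ hp.not_ge h.1
        rw [← intervalIntegral.integral_of_le hpq, intervalIntegral.integral_const_mul,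
          integral_rpow (Or.inr ⟨by contrapose! hs0; linarith, hp0⟩), Gamma_add_one hs0,
          show -(s + 1) + 1 = -s by ring]
        field_simp
        ring

end GammaDifference

section LaplaceTransform

variable {s a b : ℝ}

theorem indicator_Ioi_mul_eq_indicator_Iio (ha : 0 < a) (g h : ℝ → ℝ) (y t : ℝ) :
    (Ioi (a * y)).indicator g t * h y = (Iio (t / a)).indicator (fun y ↦ g t * h y) y := by
  by_cases hyt : a * y < t
  · have hyt' : y < t / a := by rwa [lt_div_iff₀ ha, mul_comm]
    simp [indicator_of_mem, hyt, hyt']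
  · have hyt' : ¬ y < t / a := by rwa [lt_div_iff₀ ha, mul_comm]
    simp [indicator_of_notMem, hyt, hyt']

theorem integral_indicator_Ioi_mul_exp_neg (ha : 0 < a) (hb : 0 < b) (g : ℝ → ℝ) (t : ℝ) :
    ∫ y in Ioi 0, (Ioi (a * y)).indicator g t * exp (-(b * y))
      = (Ioi 0).indicator (fun t ↦ g t * (1 - exp (-(b / a * t))) / b) t := by
  simp_rw [indicator_Ioi_mul_eq_indicator_Iio ha _ (fun y ↦ exp (-(b * y)))]
  rw [integral_indicator measurableSet_Iio, Measure.restrict_restrict measurableSet_Iio,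
    Iio_inter_Ioi]
  rcases le_or_gt t 0 with ht | ht
  · rw [Ioo_eq_empty (by simpa using div_nonpos_of_nonpos_of_nonneg ht ha.le),
      indicator_of_notMem (by simpa using ht), Measure.restrict_empty, integral_zero_measure]
  · rw [indicator_of_mem (mem_Ioi.2 ht), ← integral_Ioc_eq_integral_Ioo,
      ← intervalIntegral.integral_of_le (by positivity), intervalIntegral.integral_const_mul,
      intervalIntegral.integral_exp_neg_mul hb.ne', mul_zero, neg_zero, exp_zero]
    field_simp

theorem integral_upperIncompleteGamma_mul_exp_neg (hs : -1 < s) (hs0 : s ≠ 0) (ha : 0 < a)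
    (hb : 0 < b) :
    ∫ y in Ioi 0, upperIncompleteGamma s (a * y) * exp (-(b * y))
      = Gamma s * (1 - (1 + b / a) ^ (-s)) / b := by
  set g : ℝ → ℝ := fun t ↦ t ^ (s - 1) * exp (-t)
  set φ : ℝ → ℝ := fun t ↦ t ^ (s - 1) * (exp (-(1 * t)) - exp (-((1 + b / a) * t)))
  set F : ℝ → ℝ → ℝ := fun y t ↦ (Ioi (a * y)).indicator g t * exp (-(b * y))
  have hc : 1 ≤ 1 + b / a := by have := div_pos hb ha; linarith
  have hinner (t : ℝ) : ∫ y in Ioi 0, F y t = (Ioi 0).indicator (fun t ↦ φ t / b) t := by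
    rw [integral_indicator_Ioi_mul_exp_neg ha hb g t]
    congr 1 with t
    simp only [φ, g, one_mul, add_mul, neg_add, exp_add]
    ring
  have hmeas :
      AEStronglyMeasurable (Function.uncurry F) ((volume.restrict (Ioi 0)).prod volume) := by
    have : Function.uncurry F = fun x : ℝ × ℝ ↦
        {x | a * x.1 < x.2}.indicator (fun x ↦ g x.2) x * exp (-(b * x.1)) := by
      ext ⟨y, t⟩
      simp [F, indicator_apply]
    rw [this]
    exact (Measurable.mul (Measurable.indicator (by fun_prop)
      (measurableSet_lt (by fun_prop) (by fun_prop))) (by fun_prop)).aestronglyMeasurable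
  have hslice (t : ℝ) : IntegrableOn (fun y ↦ F y t) (Ioi 0) := by
    have hexp : IntegrableOn (fun y ↦ exp (-(b * y))) (Ioi 0) := by
      simpa using exp_neg_integrableOn_Ioi 0 hb
    simp_rw [F, indicator_Ioi_mul_eq_indicator_Iio ha _ (fun y ↦ exp (-(b * y)))]
    exact (hexp.const_mul _).indicator measurableSet_Iio
  have hnorm (t : ℝ) : ∫ y in Ioi 0, ‖F y t‖ = ∫ y in Ioi 0, F y t := by
    refine setIntegral_congr_fun measurableSet_Ioi fun y (hy : 0 < y) ↦ norm_of_nonneg ?_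
    refine mul_nonneg (indicator_nonneg (fun t (ht : a * y < t) ↦ ?_) t) (exp_pos _).le
    have : 0 < t := (mul_pos ha hy).trans ht
    positivity
  have hF : Integrable (Function.uncurry F) ((volume.restrict (Ioi 0)).prod volume) := by
    refine (integrable_prod_iff' hmeas).2 ⟨ae_of_all _ hslice, ?_⟩
    simp_rw [Function.uncurry_apply_pair, hnorm, hinner]
    exact (integrable_indicator_iff measurableSet_Ioi).2
      ((integrableOn_rpow_sub_one_mul_exp_neg_sub hs one_pos hc).div_const b)
  calc ∫ y in Ioi 0, upperIncompleteGamma s (a * y) * exp (-(b * y))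
      = ∫ y in Ioi 0, ∫ t, F y t := by
        refine setIntegral_congr_fun measurableSet_Ioi fun y _ ↦ ?_
        rw [integral_mul_const, integral_indicator measurableSet_Ioi]
        rfl
    _ = ∫ t, ∫ y in Ioi 0, F y t := integral_integral_swap hF
    _ = Gamma s * (1 - (1 + b / a) ^ (-s)) / b := by
        simp_rw [hinner]
        rw [integral_indicator measurableSet_Ioi, integral_div,
          integral_rpow_sub_one_mul_exp_neg_sub hs hs0 one_pos hc, one_rpow]

end LaplaceTransform

theorem incGamma_integral (A B : ℝ) (hA : 0 < A) (hB : 0 < B) :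
    ∫ y in Set.Ioi (0 : ℝ),
        upperIncompleteGamma (-1/2) (4 * Real.pi * A * y) * Real.exp (-(4 * Real.pi * B * y))
      = 1 / (2 * Real.sqrt Real.pi * B) * (Real.sqrt (1 + B / A) - 1) := by
  have h4π : 0 < 4 * π := by positivity
  rw [integral_upperIncompleteGamma_mul_exp_neg (by norm_num) (by norm_num) (mul_pos h4π hA)
      (mul_pos h4π hB), mul_div_mul_left _ _ h4π.ne', Gamma_neg_one_half,
    show -(-1 / 2 : ℝ) = 1 / 2 by norm_num, ← sqrt_eq_rpow]
  have hπ : π = √π ^ 2 := (sq_sqrt pi_pos.le).symm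
  have hr : 0 < √π := sqrt_pos.2 pi_pos
  -- so that `π` can be rewritten as `√π ^ 2` without also rewriting the `π` under `√`
  generalize √π = r at hπ hr ⊢
  rw [hπ]
  field_simp
  ring
end

section
/- For every positive integer N divisible by 4, the sum of (n−m) over all pairs of positive integers (n,m) with n² − m² = N equals (the sum over divisors d of N/4 of min(d, (N/4)/d)) minus (√(N/4) if N is a perfect square, else 0). -/
open Finset

lemma sum_min_divisors (M : ℕ) (hM : 0 < M) :
    (∑ d ∈ M.divisors, min d (M / d) : ℕ)
      = 2 * (∑ a ∈ M.divisors.filter (fun a => a * a < M), a)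
        + (if IsSquare M then Nat.sqrt M else 0) := by
  rw [← Finset.sum_filter_add_sum_filter_not M.divisors (fun d => d * d < M)]
  have h1 : ∑ d ∈ M.divisors.filter (fun d => d * d < M), min d (M / d)
      = ∑ a ∈ M.divisors.filter (fun a => a * a < M), a := by
    apply Finset.sum_congr rfl
    intro d hd
    simp only [Finset.mem_filter, Nat.mem_divisors] at hd
    obtain ⟨⟨hdvd, hM0⟩, hlt⟩ := hd
    have hd0 : 0 < d := Nat.pos_of_dvd_of_pos hdvd hM
    exact min_eq_left (Nat.le_div_iff_mul_le hd0 |>.mpr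
      (by nlinarith [Nat.div_mul_cancel hdvd]))
  have h2 : ∑ d ∈ M.divisors.filter (fun d => ¬ d * d < M), min d (M / d)
      = ∑ d ∈ M.divisors.filter (fun d => ¬ d * d < M), M / d := by
    apply Finset.sum_congr rfl
    intro d hd
    simp only [Finset.mem_filter, Nat.mem_divisors] at hd
    obtain ⟨⟨hdvd, hM0⟩, hge⟩ := hd
    exact min_eq_right (Nat.div_le_of_le_mul (by omega))
  rw [h1, h2]
  have hsplit : M.divisors.filter (fun d => ¬ d * d < M)
      = (M.divisors.filter (fun d => M < d * d)) ∪ (M.divisors.filter (fun d => d * d = M)) := by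
    rw [← Finset.filter_or]
    apply Finset.filter_congr
    intro d _
    simp only [not_lt]
    omega
  rw [hsplit, Finset.sum_union]
  · have h3 : ∑ d ∈ M.divisors.filter (fun d => M < d * d), M / d
        = ∑ a ∈ M.divisors.filter (fun a => a * a < M), a := by
      apply Finset.sum_nbij' (fun d => M / d) (fun a => M / a)
      · intro d hd
        simp only [Finset.mem_filter, Nat.mem_divisors] at hd ⊢
        obtain ⟨⟨hdvd, hM0⟩, hlt⟩ := hd
        have hd0 : 0 < d := Nat.pos_of_dvd_of_pos hdvd hM
        have heq : M / d * d = M := Nat.div_mul_cancel hdvd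
        have hq0 : 0 < M / d := Nat.div_pos (Nat.le_of_dvd hM hdvd) hd0
        refine ⟨⟨⟨d, by omega⟩, hM0⟩, ?_⟩
        have : M / d < d := by nlinarith
        nlinarith
      · intro a ha
        simp only [Finset.mem_filter, Nat.mem_divisors] at ha ⊢
        obtain ⟨⟨hdvd, hM0⟩, hlt⟩ := ha
        have ha0 : 0 < a := Nat.pos_of_dvd_of_pos hdvd hM
        have heq : M / a * a = M := Nat.div_mul_cancel hdvd
        have hq0 : 0 < M / a := Nat.div_pos (Nat.le_of_dvd hM hdvd) ha0
        refine ⟨⟨⟨a, by omega⟩, hM0⟩, ?_⟩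
        have : a < M / a := by nlinarith
        nlinarith
      · intro d hd
        simp only [Finset.mem_filter, Nat.mem_divisors] at hd
        exact Nat.div_div_self hd.1.1 (by omega)
      · intro a ha
        simp only [Finset.mem_filter, Nat.mem_divisors] at ha
        exact Nat.div_div_self ha.1.1 (by omega)
      · intro d hd
        rfl
    have h4 : ∑ d ∈ M.divisors.filter (fun d => d * d = M), M / d
        = if IsSquare M then Nat.sqrt M else 0 := by
      by_cases hsq : IsSquare M
      · obtain ⟨r, hr⟩ := id hsq
        have hr0 : 0 < r := by nlinarith
        have hset : M.divisors.filter (fun d => d * d = M) = {r} := by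
          ext d
          simp only [Finset.mem_filter, Nat.mem_divisors, Finset.mem_singleton]
          constructor
          · rintro ⟨⟨hdvd, hM0⟩, hdd⟩
            nlinarith [sq_nonneg (d - r), sq_nonneg (r - d)]
          · intro h
            subst h
            refine ⟨⟨Dvd.intro _ hr.symm, by omega⟩, hr.symm⟩
        rw [hset, Finset.sum_singleton, if_pos hsq]
        have hs : Nat.sqrt M = r := by rw [hr, ← pow_two]; exact Nat.sqrt_eq' r
        rw [hs, hr]
        exact Nat.mul_div_cancel_left r hr0
      · rw [if_neg hsq]
        apply Finset.sum_eq_zero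
        intro d hd
        simp only [Finset.mem_filter, Nat.mem_divisors] at hd
        exact absurd ⟨d, hd.2.symm⟩ hsq
    rw [h3, h4]
    ring
  · rw [Finset.disjoint_left]
    intro d hd hd'
    simp only [Finset.mem_filter] at hd hd'
    omega

/-- The finset of pairs `(n, m)` of positive integers with `n² − m² = N`. -/
def diffSquarePairs (N : ℕ) : Finset (ℕ × ℕ) :=
  (Finset.Icc 1 N ×ˢ Finset.Icc 1 N).filter fun p => p.1 ^ 2 = p.2 ^ 2 + N

lemma pair_facts (M n m : ℕ) (hM : 0 < M) (hp : (n, m) ∈ diffSquarePairs (4 * M)) :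
    m < n ∧ (n - m) % 2 = 0 ∧ ((n - m) / 2) * ((n + m) / 2) = M := by
  simp only [diffSquarePairs, Finset.mem_filter, Finset.mem_product, Finset.mem_Icc] at hp
  obtain ⟨⟨⟨hn1, hn2⟩, hm1, hm2⟩, heq⟩ := hp
  have hmn : m < n := by nlinarith
  have hprod : (n - m) * (n + m) = 4 * M := by
    nlinarith [Nat.sub_add_cancel hmn.le]
  have hpar : (n - m) % 2 = 0 := by
    by_contra h
    have h1 : (n - m) % 2 = 1 := by omega
    have h2 : (n + m) % 2 = 1 := by omega
    have hmm := Nat.mul_mod (n - m) (n + m) 2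
    rw [hprod, h1, h2] at hmm
    omega
  refine ⟨hmn, hpar, ?_⟩
  have hc : n - m = 2 * ((n - m) / 2) := by omega
  have hd : n + m = 2 * ((n + m) / 2) := by omega
  nlinarith [hprod, hc, hd]

lemma sum_pairs (M : ℕ) (hM : 0 < M) :
    ∑ p ∈ diffSquarePairs (4 * M), ((p.1 : ℤ) - (p.2 : ℤ))
      = ∑ a ∈ M.divisors.filter (fun a => a * a < M), (2 * a : ℤ) := by
  apply Finset.sum_nbij' (fun p => (p.1 - p.2) / 2) (fun a => (M / a + a, M / a - a))
  · intro p hp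
    obtain ⟨n, m⟩ := p
    obtain ⟨hmn, hpar, hab⟩ := pair_facts M n m hM hp
    simp only [Finset.mem_filter, Nat.mem_divisors]
    have ha0 : 0 < (n - m) / 2 := by
      simp only [diffSquarePairs, Finset.mem_filter, Finset.mem_product, Finset.mem_Icc] at hp
      omega
    have haltb : (n - m) / 2 < (n + m) / 2 := by
      simp only [diffSquarePairs, Finset.mem_filter, Finset.mem_product, Finset.mem_Icc] at hp
      omega
    exact ⟨⟨⟨_, hab.symm⟩, by omega⟩, by nlinarith⟩
  · intro a ha
    simp only [Finset.mem_filter, Nat.mem_divisors] at ha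
    obtain ⟨⟨hdvd, hM0⟩, hlt⟩ := ha
    have ha0 : 0 < a := Nat.pos_of_dvd_of_pos hdvd hM
    have hab : a * (M / a) = M := Nat.mul_div_cancel' hdvd
    set b := M / a with hb
    have hb0 : 0 < b := Nat.div_pos (Nat.le_of_dvd hM hdvd) ha0
    have haltb : a < b := by nlinarith
    have hbM : b ≤ M := Nat.le_of_dvd hM (Dvd.intro_left a hab)
    simp only [diffSquarePairs, Finset.mem_filter, Finset.mem_product, Finset.mem_Icc]
    obtain ⟨e, he⟩ := Nat.exists_eq_add_of_le haltb.le
    refine ⟨⟨⟨by omega, by omega⟩, by omega, by omega⟩, ?_⟩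
    show (b + a) ^ 2 = (b - a) ^ 2 + 4 * M
    have h1 : b - a = e := by omega
    rw [h1, he]
    ring_nf
    nlinarith
  · intro p hp
    obtain ⟨n, m⟩ := p
    obtain ⟨hmn, hpar, hab⟩ := pair_facts M n m hM hp
    have ha0 : 0 < (n - m) / 2 := by omega
    have hMdiv : M / ((n - m) / 2) = (n + m) / 2 := by
      rw [← hab]
      exact Nat.mul_div_cancel_left _ ha0
    simp only [hMdiv, Prod.mk.injEq]
    constructor <;> omega
  · intro a ha
    simp only [Finset.mem_filter, Nat.mem_divisors] at ha
    obtain ⟨⟨hdvd, hM0⟩, hlt⟩ := ha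
    have ha0 : 0 < a := Nat.pos_of_dvd_of_pos hdvd hM
    have hab : a * (M / a) = M := Nat.mul_div_cancel' hdvd
    have haltb : a < M / a := by nlinarith
    simp only
    omega
  · intro p hp
    obtain ⟨n, m⟩ := p
    obtain ⟨hmn, hpar, hab⟩ := pair_facts M n m hM hp
    simp only
    omega

lemma isSquare_four_mul (M : ℕ) : IsSquare (4 * M) ↔ IsSquare M := by
  constructor
  · rintro ⟨k, hk⟩
    have h2 : 2 ∣ k := by
      have : (2 : ℕ).Prime := Nat.prime_two
      have hdvd : 2 ∣ k * k := ⟨2 * M, by omega⟩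
      exact (Nat.Prime.dvd_mul this).mp hdvd |>.elim id id
    obtain ⟨r, rfl⟩ := h2
    exact ⟨r, by nlinarith⟩
  · rintro ⟨r, rfl⟩
    exact ⟨2 * r, by ring⟩

theorem sum_diffSquarePairs_four_dvd (N : ℕ) (hN : 0 < N) (h4 : 4 ∣ N) :
    ∑ p ∈ diffSquarePairs N, ((p.1 : ℤ) - (p.2 : ℤ))
      = (∑ d ∈ (N / 4).divisors, min d (N / 4 / d) : ℕ)
        - (if IsSquare N then (Nat.sqrt (N / 4) : ℤ) else 0) := by
  obtain ⟨M, rfl⟩ := h4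
  have hM : 0 < M := by omega
  have hdiv : 4 * M / 4 = M := Nat.mul_div_cancel_left M (by norm_num)
  rw [hdiv, sum_pairs M hM, sum_min_divisors M hM]
  by_cases h : IsSquare M
  · rw [if_pos h, if_pos ((isSquare_four_mul M).mpr h)]
    push_cast
    rw [Finset.mul_sum]
    ring
  · rw [if_neg h, if_neg (fun hh => h ((isSquare_four_mul M).mp hh))]
    push_cast
    rw [Finset.mul_sum]
    ring
end

section
/- For every positive integer N, (1/2)·(the sum of (n−m) over pairs of odd positive integers (n,m) with n² − m² = 8N) equals the sum of u over all factorizations uv = 2N with 0 < u < v and u+v odd, which in turn equals (1/2)·s(2N) − s(N/2), where s(k) = Σ_{d|k} min(d, k/d) and s(N/2) = 0 when N is odd. -/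
/-- `s(k) = ∑_{d ∣ k} min(d, k/d)`. -/
def sdiv (k : ℕ) : ℕ := ∑ d ∈ k.divisors, min d (k / d)

/-- Pairs `(n, m)` of odd positive integers with `n² − m² = 8N`. -/
def oddDiffSquarePairs (N : ℕ) : Finset (ℕ × ℕ) :=
  (Finset.Icc 1 (8 * N) ×ˢ Finset.Icc 1 (8 * N)).filter
    fun p => Odd p.1 ∧ Odd p.2 ∧ p.1 ^ 2 = p.2 ^ 2 + 8 * N

/-!
Writing `n = v + u` and `m = v - u` turns the odd pairs with `n² - m² = 8N` into the factorizations
`uv = 2N` with `u < v` and `u + v` odd, and then `(n - m) / 2 = u`.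

For the second identity write `s(k)` as the sum of `min u v` over the ordered factorizations
`uv = k`. For `k = 2N` the factorizations with `u + v` odd contribute twice the sum of their smaller
factors, by the symmetry `(u, v) ↦ (v, u)`. Those with `u + v` even have both factors even, so they
are the pairs `(2a, 2b)` with `ab = N / 2` and contribute `2 s(N / 2)`, or nothing when `N` is odd.
-/

open Finset Nat

namespace Nat

theorem sum_divisors_filter_eq_sum_divisorsAntidiagonal_filter {M : Type*} [AddCommMonoid M]
    (k : ℕ) (p : ℕ → ℕ → Prop) [∀ a b, Decidable (p a b)] (f : ℕ → ℕ → M) :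
    ∑ d ∈ k.divisors with p d (k / d), f d (k / d)
      = ∑ x ∈ k.divisorsAntidiagonal with p x.1 x.2, f x.1 x.2 := by
  rw [sum_filter, sum_filter]
  exact (Nat.sum_divisorsAntidiagonal fun a b => if p a b then f a b else 0).symm

theorem even_and_even_of_even_add_of_even_mul {a b : ℕ} (hadd : Even (a + b))
    (hmul : Even (a * b)) : Even a ∧ Even b := by
  rw [Nat.even_add] at hadd
  rw [Nat.even_mul] at hmul
  tauto

end Nat

theorem sum_min_eq_two_nsmul_sum_filter_fst_lt {α : Type*} [LinearOrder α] [AddCommMonoid α]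
    (s : Finset (α × α)) (hswap : ∀ x ∈ s, x.swap ∈ s) (hne : ∀ x ∈ s, x.1 ≠ x.2) :
    ∑ x ∈ s, min x.1 x.2 = 2 • ∑ x ∈ s with x.1 < x.2, x.1 := by
  have hlt : ∑ x ∈ s with x.1 < x.2, min x.1 x.2 = ∑ x ∈ s with x.1 < x.2, x.1 :=
    sum_congr rfl fun x hx => min_eq_left (mem_filter.1 hx).2.le
  have hgt : ∑ x ∈ s with ¬ x.1 < x.2, min x.1 x.2 = ∑ x ∈ s with x.1 < x.2, x.1 := by
    refine sum_nbij' Prod.swap Prod.swap ?_ ?_ (fun _ _ => rfl) (fun _ _ => rfl) ?_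
    · intro x hx
      rw [mem_filter] at hx ⊢
      exact ⟨hswap x hx.1, lt_of_le_of_ne (not_lt.1 hx.2) (hne x hx.1).symm⟩
    · intro x hx
      rw [mem_filter] at hx ⊢
      exact ⟨hswap x hx.1, not_lt.2 hx.2.le⟩
    · intro x hx
      exact min_eq_right (not_lt.1 (mem_filter.1 hx).2)
  rw [← sum_filter_add_sum_filter_not s (fun x => x.1 < x.2), hlt, hgt, two_nsmul]

theorem sdiv_eq_sum_divisorsAntidiagonal (k : ℕ) :
    sdiv k = ∑ x ∈ k.divisorsAntidiagonal, min x.1 x.2 :=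
  (sum_divisorsAntidiagonal fun a b => min a b).symm

theorem sum_min_filter_even_add_divisorsAntidiagonal_four_mul (M : ℕ) :
    ∑ x ∈ (4 * M).divisorsAntidiagonal with Even (x.1 + x.2), min x.1 x.2 = 2 * sdiv M := by
  rw [sdiv_eq_sum_divisorsAntidiagonal, mul_sum, eq_comm]
  refine sum_nbij (fun x => (2 * x.1, 2 * x.2)) ?_ ?_ ?_ fun x _ => by omega
  · intro x hx
    rw [mem_divisorsAntidiagonal] at hx
    rw [mem_filter, mem_divisorsAntidiagonal]
    refine ⟨⟨by rw [← hx.1]; ring, by omega⟩, ?_⟩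
    rw [← mul_add]
    exact even_two_mul _
  · intro x _ y _ h
    simp only [Prod.ext_iff] at h ⊢
    omega
  · rintro ⟨a, b⟩ hx
    rw [coe_filter, Set.mem_ofPred_eq, mem_divisorsAntidiagonal] at hx
    obtain ⟨⟨hab, hM⟩, heven⟩ := hx
    obtain ⟨⟨c, rfl⟩, ⟨d, rfl⟩⟩ := even_and_even_of_even_add_of_even_mul heven
      (hab ▸ ⟨2 * M, by ring⟩)
    refine ⟨(c, d), ?_, by simp only [Prod.ext_iff]; omega⟩
    rw [mem_coe, mem_divisorsAntidiagonal]
    exact ⟨by linarith, by omega⟩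

theorem filter_even_add_divisorsAntidiagonal_two_mul_eq_empty {N : ℕ} (hN : ¬ 2 ∣ N) :
    {x ∈ (2 * N).divisorsAntidiagonal | Even (x.1 + x.2)} = ∅ := by
  refine filter_eq_empty_iff.2 fun x hx heven => hN ?_
  rw [mem_divisorsAntidiagonal] at hx
  obtain ⟨⟨c, hc⟩, ⟨d, hd⟩⟩ := even_and_even_of_even_add_of_even_mul heven
    (hx.1 ▸ even_two_mul N)
  exact ⟨c * d, by nlinarith [hx.1]⟩

theorem sum_min_filter_even_add_divisorsAntidiagonal_two_mul (N : ℕ) :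
    ∑ x ∈ (2 * N).divisorsAntidiagonal with Even (x.1 + x.2), min x.1 x.2
      = if 2 ∣ N then 2 * sdiv (N / 2) else 0 := by
  split_ifs with hN
  · obtain ⟨M, rfl⟩ := hN
    rw [Nat.mul_div_cancel_left M two_pos, ← mul_assoc]
    exact sum_min_filter_even_add_divisorsAntidiagonal_four_mul M
  · rw [filter_even_add_divisorsAntidiagonal_two_mul_eq_empty hN, sum_empty]

theorem sdiv_two_mul (N : ℕ) :
    sdiv (2 * N) = 2 * ∑ x ∈ (2 * N).divisorsAntidiagonal with x.1 < x.2 ∧ Odd (x.1 + x.2), x.1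
      + if 2 ∣ N then 2 * sdiv (N / 2) else 0 := by
  rw [sdiv_eq_sum_divisorsAntidiagonal,
    ← sum_filter_add_sum_filter_not _ fun x => Odd (x.1 + x.2)]
  simp only [Nat.not_odd_iff_even]
  rw [sum_min_filter_even_add_divisorsAntidiagonal_two_mul, sum_min_eq_two_nsmul_sum_filter_fst_lt,
    filter_filter, smul_eq_mul]
  · simp only [and_comm]
  · intro x hx
    rw [mem_filter] at hx ⊢
    rw [swap_mem_divisorsAntidiagonal, Prod.fst_swap, Prod.snd_swap, add_comm]
    exact hx
  · intro x hx hx12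
    rw [mem_filter, hx12, ← two_mul] at hx
    exact Nat.not_odd_iff_even.2 (even_two_mul _) hx.2

theorem add_sub_mem_oddDiffSquarePairs {N u v : ℕ} (hN : N ≠ 0) (huv : u * v = 2 * N)
    (hlt : u < v) (hodd : Odd (u + v)) : (v + u, v - u) ∈ oddDiffSquarePairs N := by
  have hu : 0 < u := Nat.pos_of_ne_zero fun h => by simp [h] at huv; omega
  have hv : v ≤ 2 * N := huv ▸ Nat.le_mul_of_pos_left v hu
  simp only [oddDiffSquarePairs, mem_filter, mem_product, mem_Icc]
  refine ⟨⟨⟨by omega, by omega⟩, by omega, by omega⟩, by rwa [add_comm], ?_, ?_⟩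
  · rw [Nat.odd_iff] at hodd ⊢
    omega
  · zify [hlt.le]
    linear_combination (4 : ℤ) * (by exact_mod_cast huv : (u : ℤ) * v = 2 * N)

theorem exists_add_sub_eq_of_mem_oddDiffSquarePairs {N n m : ℕ}
    (h : (n, m) ∈ oddDiffSquarePairs N) :
    ∃ u v, N ≠ 0 ∧ u * v = 2 * N ∧ u < v ∧ Odd (u + v) ∧ (v + u, v - u) = (n, m) := by
  simp only [oddDiffSquarePairs, mem_filter, mem_product, mem_Icc] at h
  obtain ⟨⟨⟨hn1, hn8⟩, hm1, -⟩, hn, hm, hsq⟩ := h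
  have hmn : m < n := by nlinarith
  obtain ⟨c, hc⟩ : Even (n - m) := Nat.Odd.sub_odd hn hm
  obtain rfl : n = m + 2 * c := by omega
  refine ⟨c, m + c, by omega, by nlinarith, by omega, ?_, by simp only [Prod.ext_iff]; omega⟩
  rwa [show c + (m + c) = m + 2 * c by ring]

theorem sum_filter_divisorsAntidiagonal_eq_half_sum_oddDiffSquarePairs (N : ℕ) :
    ∑ x ∈ (2 * N).divisorsAntidiagonal with x.1 < x.2 ∧ Odd (x.1 + x.2), (x.1 : ℚ)
      = (1 / 2 : ℚ) * ∑ p ∈ oddDiffSquarePairs N, ((p.1 : ℚ) - (p.2 : ℚ)) := by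
  rw [mul_sum]
  refine sum_nbij (fun x => (x.2 + x.1, x.2 - x.1)) ?_ ?_ ?_ ?_
  · intro x hx
    rw [mem_filter, mem_divisorsAntidiagonal] at hx
    exact add_sub_mem_oddDiffSquarePairs (by omega) hx.1.1 hx.2.1 hx.2.2
  · intro x hx y hy h
    simp only [coe_filter, Set.mem_ofPred_eq] at hx hy
    simp only [Prod.ext_iff] at h ⊢
    omega
  · rintro ⟨n, m⟩ h
    obtain ⟨u, v, hN, huv, hlt, hodd, hpair⟩ := exists_add_sub_eq_of_mem_oddDiffSquarePairs h
    exact ⟨(u, v), by simp [hN, huv, hlt, hodd], hpair⟩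
  · intro x hx
    rw [mem_filter] at hx
    push_cast [hx.2.1.le]
    ring

theorem half_sum_oddDiffSquarePairs_general (N : ℕ) :
    (1 / 2 : ℚ) * ∑ p ∈ oddDiffSquarePairs N, ((p.1 : ℚ) - (p.2 : ℚ))
        = ∑ u ∈ (2 * N).divisors.filter (fun u => u < 2 * N / u ∧ Odd (u + 2 * N / u)), (u : ℚ)
      ∧ ∑ u ∈ (2 * N).divisors.filter (fun u => u < 2 * N / u ∧ Odd (u + 2 * N / u)), (u : ℚ)
        = (1 / 2 : ℚ) * (sdiv (2 * N) : ℚ)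
            - (if 2 ∣ N then (sdiv (N / 2) : ℚ) else 0) := by
  have hpairs := Nat.sum_divisors_filter_eq_sum_divisorsAntidiagonal_filter (2 * N)
    (fun a b => a < b ∧ Odd (a + b)) (fun a _ => (a : ℚ))
  refine ⟨by rw [hpairs, sum_filter_divisorsAntidiagonal_eq_half_sum_oddDiffSquarePairs], ?_⟩
  rw [hpairs, sdiv_two_mul]
  push_cast
  split_ifs <;> ring

theorem half_sum_oddDiffSquarePairs (N : ℕ) (hN : 0 < N) :
    (1 / 2 : ℚ) * ∑ p ∈ oddDiffSquarePairs N, ((p.1 : ℚ) - (p.2 : ℚ))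
        = ∑ u ∈ (2 * N).divisors.filter (fun u => u < 2 * N / u ∧ Odd (u + 2 * N / u)), (u : ℚ)
      ∧ ∑ u ∈ (2 * N).divisors.filter (fun u => u < 2 * N / u ∧ Odd (u + 2 * N / u)), (u : ℚ)
        = (1 / 2 : ℚ) * (sdiv (2 * N) : ℚ)
            - (if 2 ∣ N then (sdiv (N / 2) : ℚ) else 0) :=
  half_sum_oddDiffSquarePairs_general N
end

section
/- Euler's pentagonal number recurrence: for every positive integer n, the sum over all integers k of (−1)^k · p(n − k(3k+1)/2) equals 0, where p is the partition function and p(m) = 0 for m < 0. -/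
/-- The partition function `p(n)`. -/
def partitionCount (n : ℕ) : ℕ := Fintype.card (Nat.Partition n)

/-- The smallest part of a partition (`0` for the empty partition). -/
noncomputable def Nat.Partition.smallestPart {n : ℕ} (π : n.Partition) : ℕ := sInf {a | a ∈ π.parts}

/-- `spt(n)`: the total number of smallest parts in the partitions of `n`. -/
noncomputable def spt (n : ℕ) : ℕ := ∑ π : Nat.Partition n, π.parts.count π.smallestPart

/-- The Kronecker symbol `(12 | m)`. -/
def chi12 (m : ℕ) : ℤ :=
  if m % 12 = 1 ∨ m % 12 = 11 then 1 else if m % 12 = 5 ∨ m % 12 = 7 then -1 else 0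

/-- `a(n) = −∑_{ab = 6n, 0 < a < b} (12 | b² − a²) · a`. -/
def sptRHS (n : ℕ) : ℤ :=
  - ∑ a ∈ (6 * n).divisors.filter (fun a => a < 6 * n / a),
      chi12 ((6 * n / a) ^ 2 - a ^ 2) * a

/-- `b(n)` from Theorem 2. -/
def bfun (n : ℕ) : ℤ :=
  if n % 2 = 1 then (-1) ^ (n + 1) * (2 * sdiv n)
  else if n % 4 = 0 then (-1) ^ (n + 1) * (4 * sdiv (n / 4))
  else 0

/-- The number of overpartitions of `n`: each partition together with a choice of
a set of part sizes to overline (the first occurrence of each chosen size). -/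
def overpartitionCount (n : ℕ) : ℕ :=
  ∑ π : Nat.Partition n, π.parts.toFinset.powerset.card

/-- `sptbar(n)`: the number of odd smallest parts in the overpartitions of `n`. -/
noncomputable def sptbar (n : ℕ) : ℕ :=
  ∑ π : Nat.Partition n, ∑ _S ∈ π.parts.toFinset.powerset,
    if Odd π.smallestPart then π.parts.count π.smallestPart else 0

/-- `M2(n)`: the number of partitions of `n` without repeated odd parts. -/
def M2 (n : ℕ) : ℕ :=
  (Finset.univ.filter fun π : Nat.Partition n =>
    ∀ i ∈ π.parts, Odd i → π.parts.count i ≤ 1).card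

/-- `M2spt(n)`: the number of smallest parts in those partitions of `n` without
repeated odd parts whose smallest part is even. -/
noncomputable def M2spt (n : ℕ) : ℕ :=
  ∑ π : Nat.Partition n,
    if (∀ i ∈ π.parts, Odd i → π.parts.count i ≤ 1) ∧ Even π.smallestPart ∧ π.parts ≠ 0
    then π.parts.count π.smallestPart else 0

/-- `σ(n)`: sum of divisors. -/
def sigma1 (n : ℕ) : ℕ := ∑ d ∈ n.divisors, d

/-- `c(n) = σ(n) − σ(n/2) − s(2n)/2 + s(n/2)`, with `σ`, `s` vanishing at non-integers. -/
def cfun (n : ℕ) : ℚ :=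
  (sigma1 n : ℚ) - (if 2 ∣ n then (sigma1 (n / 2) : ℚ) else 0)
    - (sdiv (2 * n) : ℚ) / 2 + (if 2 ∣ n then (sdiv (n / 2) : ℚ) else 0)

/-- `p` extended by zero to `ℤ`. -/
def pZ (m : ℤ) : ℤ := if 0 ≤ m then (partitionCount m.toNat : ℤ) else 0

/-- `spt` extended by zero to `ℤ`. -/
noncomputable def sptZ (m : ℤ) : ℤ := if 0 ≤ m then (spt m.toNat : ℤ) else 0

/-- `sptbar` extended by zero to `ℤ`. -/
noncomputable def sptbarZ (m : ℤ) : ℤ := if 0 ≤ m then (sptbar m.toNat : ℤ) else 0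

/-- `M2spt` extended by zero to `ℤ`, valued in `ℚ`. -/
noncomputable def M2sptQ (m : ℤ) : ℚ := if 0 ≤ m then (M2spt m.toNat : ℚ) else 0

/-! The generating function of `p` is `∏ᵢ (1 - Xⁱ)⁻¹`, and by the pentagonal number theorem
`∏ᵢ (1 - Xⁱ) = ∑ₖ (-1)ᵏ X^(k(3k-1)/2)`. The product of the two series is `1`, so for `n > 0` its
`n`-th coefficient, which is the sum in the recurrence up to `k ↦ -k`, vanishes. -/

open PowerSeries PowerSeries.WithPiTopology

noncomputable def partitionSeries (R : Type*) [CommSemiring R] : R⟦X⟧ :=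
  PowerSeries.mk fun n ↦ (partitionCount n : R)

theorem hasProd_partitionSeries (R : Type*) [CommSemiring R] [TopologicalSpace R] [T2Space R]
    [IsTopologicalSemiring R] :
    HasProd (fun i ↦ ∑' j : ℕ, (X : R⟦X⟧) ^ ((i + 1) * j)) (partitionSeries R) := by
  simpa [partitionSeries, partitionCount, Nat.Partition.restricted] using
    Nat.Partition.hasProd_powerSeriesMk_card_restricted R (fun _ ↦ True)

theorem partitionSeries_mul_pentagonalSeries (R : Type*) [CommRing R] :
    partitionSeries R * pentagonalSeries R = 1 := by
  -- The identity is purely algebraic; the discrete topology only serves to evaluate the products.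
  let _ : TopologicalSpace R := ⊥
  have _ : DiscreteTopology R := ⟨rfl⟩
  have hgeom (i : ℕ) : (∑' j : ℕ, (X : R⟦X⟧) ^ ((i + 1) * j)) * (1 - X ^ (i + 1)) = 1 := by
    simp_rw [pow_mul]
    exact tsum_pow_mul_one_sub_of_constantCoeff_eq_zero (by simp)
  have h := (hasProd_partitionSeries R).mul (hasProd_one_sub_X_pow R)
  simp only [hgeom] at h
  exact h.unique hasProd_one

theorem pZ_natCast_sub_natCast (n m : ℕ) :
    pZ ((n : ℤ) - m) = if m ≤ n then (partitionCount (n - m) : ℤ) else 0 := by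
  unfold pZ
  split_ifs <;> first | omega | congr; omega

theorem coeff_X_pow_mul_partitionSeries (n m : ℕ) :
    coeff n (X ^ m * partitionSeries ℤ) = pZ ((n : ℤ) - m) := by
  rw [coeff_X_pow_mul', pZ_natCast_sub_natCast, partitionSeries, coeff_mk]

theorem hasSum_negOnePow_mul_pZ_sub_pentagonal {n : ℕ} (hn : n ≠ 0) :
    HasSum (fun k : ℤ ↦ (k.negOnePow : ℤ) * pZ (n - pentagonal k)) 0 := by
  have h := ((hasSum_pentagonalSeries ℤ).mul_left (partitionSeries ℤ)).map (coeff n)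
    (continuous_coeff ℤ n)
  rw [partitionSeries_mul_pentagonalSeries, coeff_one, if_neg hn] at h
  convert h using 2 with k
  rw [Function.comp_apply, mul_left_comm, ← zsmul_eq_mul, map_zsmul, smul_eq_mul,
    mul_comm (partitionSeries ℤ), coeff_X_pow_mul_partitionSeries]

theorem natCast_pentagonal_neg (k : ℤ) : ((pentagonal (-k) : ℕ) : ℤ) = k * (3 * k + 1) / 2 := by
  rw [natCast_pentagonal]; ring_nf

/-- Euler's pentagonal number recurrence for the partition function. -/
theorem euler_pentagonal_recurrence (n : ℕ) (hn : 0 < n) :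
    ∑ᶠ k : ℤ, (k.negOnePow : ℤ) * pZ ((n : ℤ) - k * (3 * k + 1) / 2) = 0 := by
  set f : ℤ → ℤ := fun k ↦ (k.negOnePow : ℤ) * pZ (n - pentagonal k)
  have hfin : f.support.Finite := by
    refine ((Set.finite_Iic n).preimage pentagonal_injective.injOn).subset fun k hk ↦ ?_
    by_contra h
    simp_all [f, pZ_natCast_sub_natCast]
  calc ∑ᶠ k : ℤ, (k.negOnePow : ℤ) * pZ ((n : ℤ) - k * (3 * k + 1) / 2)
      = ∑ᶠ k : ℤ, f (Equiv.neg ℤ k) := by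
        simp only [f, Equiv.neg_apply, Int.negOnePow_neg, natCast_pentagonal_neg]
    _ = ∑' k, f k := by rw [finsum_comp_equiv, tsum_eq_finsum hfin]
    _ = 0 := (hasSum_negOnePow_mul_pZ_sub_pentagonal hn.ne').tsum_eq
end

section
/- The formal power series identity: Σ_{n≥0} p̄(n) q^n = (Σ_{n∈ℤ} (−1)^n q^{n²})^{−1} = Π_{n≥1} (1+q^n)/(1−q^n), where p̄(n) is the number of overpartitions of n. -/
/-!
Both identities are proved modulo `X ^ (N + 1)`. Counting each partition with weight `2` per
distinct part size turns the partition generating function `Nat.Partition.genFun` into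
`∏ (1 + qⁿ) / (1 - qⁿ)`, which is the second identity. The first then amounts to Gauss's
identity `θ = ∑ (-1)ᵏ q^(k²) = ∏ (1 - qⁿ) / (1 + qⁿ)`. Evaluating the Cauchy binomial theorem
`∏_{j<m} (w + qʲ z) = ∑ q^(k choose 2) [m, k]_q zᵏ w^(m-k)` at `q², w = q^(2n+1), z = -q²`
and pairing the factors `j` and `2n - 1 - j` gives the finite Jacobi triple product
`∑_{|k| ≤ n} (-1)ᵏ q^(k²) [2n, n+k]_{q²} = (q; q²)ₙ²`. As `[2n, n+k]_{q²} (q²; q²)ₙ ≡ 1`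
modulo `q^(2(n-|k|)+2)` and `k² + 2(n-|k|) + 2 > n`, this yields `θ ≡ (q; q²)ₙ² (q²; q²)ₙ`
modulo `q^(n+1)`, and Euler's `(q; q²)ₙ (-q; q)ₙ ≡ 1` finishes the proof.
-/

open PowerSeries

theorem Finset.prod_Icc_one_eq_prod_range {M : Type*} [CommMonoid M] (f : ℕ → M) (N : ℕ) :
    ∏ n ∈ Finset.Icc 1 N, f n = ∏ j ∈ Finset.range N, f (j + 1) := by
  rw [Finset.range_eq_Ico, Finset.prod_Ico_add' f 0 N 1, zero_add,
    Finset.Ico_add_one_right_eq_Icc]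

section QBinomial

open Finset

variable {R : Type*} [CommRing R] (q : R)

theorem dvd_prod_sub_one {ι : Type*} {s : Finset ι} {f : ι → R} {c : R}
    (h : ∀ i ∈ s, c ∣ f i - 1) : c ∣ ∏ i ∈ s, f i - 1 := by
  classical
  induction s using Finset.induction_on with
  | empty => simp
  | insert a s ha ih =>
    rw [prod_insert ha, show f a * ∏ i ∈ s, f i - 1 =
      (f a - 1) * ∏ i ∈ s, f i + (∏ i ∈ s, f i - 1) by ring]
    exact dvd_add ((h a (mem_insert_self a s)).mul_right _)
      (ih fun i hi => h i (mem_insert_of_mem hi))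

def qPochhammer (n : ℕ) : R := ∏ j ∈ range n, (1 - q ^ (j + 1))

def qBinomial : ℕ → ℕ → R
  | _, 0 => 1
  | 0, _ + 1 => 0
  | n + 1, k + 1 => q ^ (k + 1) * qBinomial n (k + 1) + qBinomial n k

theorem qPochhammer_eq_prod_Icc (n : ℕ) : qPochhammer q n = ∏ i ∈ Icc 1 n, (1 - q ^ i) :=
  (prod_Icc_one_eq_prod_range (fun i => 1 - q ^ i) n).symm

@[simp] theorem qPochhammer_zero : qPochhammer q 0 = 1 := prod_range_zero _

theorem qPochhammer_succ (n : ℕ) :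
    qPochhammer q (n + 1) = qPochhammer q n * (1 - q ^ (n + 1)) :=
  prod_range_succ _ _

@[simp] theorem qBinomial_zero_right (n : ℕ) : qBinomial q n 0 = 1 := by cases n <;> rfl

theorem qBinomial_succ_succ (n k : ℕ) :
    qBinomial q (n + 1) (k + 1) = q ^ (k + 1) * qBinomial q n (k + 1) + qBinomial q n k := rfl

theorem qBinomial_eq_zero_of_lt : ∀ {n k : ℕ}, n < k → qBinomial q n k = 0
  | 0, _ + 1, _ => rfl
  | _ + 1, _ + 1, h => by
    rw [qBinomial_succ_succ, qBinomial_eq_zero_of_lt (by omega),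
      qBinomial_eq_zero_of_lt (by omega), mul_zero, add_zero]

@[simp] theorem qBinomial_self : ∀ n : ℕ, qBinomial q n n = 1
  | 0 => rfl
  | n + 1 => by
    rw [qBinomial_succ_succ, qBinomial_eq_zero_of_lt q n.lt_succ_self, qBinomial_self n,
      mul_zero, zero_add]

theorem qBinomial_add_mul_qPochhammer_mul_qPochhammer (a b : ℕ) :
    qBinomial q (a + b) a * qPochhammer q a * qPochhammer q b = qPochhammer q (a + b) := by
  induction b generalizing a with
  | zero => simp
  | succ b ihb =>
    induction a with
    | zero => simp
    | succ a iha =>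
      have h₁ := ihb (a + 1)
      rw [add_right_comm, qPochhammer_succ q a] at h₁
      rw [← add_assoc, qPochhammer_succ q b] at iha
      rw [show a + 1 + (b + 1) = a + b + 1 + 1 by ring, qBinomial_succ_succ, qPochhammer_succ q a,
        qPochhammer_succ q b, qPochhammer_succ q (a + b + 1)]
      linear_combination (q ^ (a + 1) * (1 - q ^ (b + 1))) * h₁ + (1 - q ^ (a + 1)) * iha

open Finset.Nat in
theorem prod_add_pow_mul_eq_sum_antidiagonal (w z : R) (m : ℕ) :
    ∏ j ∈ range m, (w + q ^ j * z) =
      ∑ p ∈ antidiagonal m, q ^ p.1.choose 2 * qBinomial q m p.1 * z ^ p.1 * w ^ p.2 := by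
  induction m generalizing z with
  | zero => simp
  | succ m ih =>
    set h : ℕ × ℕ → R := fun p =>
      q ^ (p.1.choose 2 + p.1) * qBinomial q m p.1 * z ^ p.1 * w ^ p.2
    have hq : ∏ j ∈ range m, (w + q ^ (j + 1) * z) = ∑ p ∈ antidiagonal m, h p := by
      rw [prod_congr rfl fun j _ => show w + q ^ (j + 1) * z = w + q ^ j * (q * z) by ring, ih]
      exact sum_congr rfl fun p _ => by simp only [h]; ring
    have hw : (∑ p ∈ antidiagonal m, h p) * w =
        w ^ (m + 1) + ∑ p ∈ antidiagonal m, h (p.1 + 1, p.2) := by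
      have e : ∑ p ∈ antidiagonal (m + 1), h p = (∑ p ∈ antidiagonal m, h p) * w := by
        rw [sum_antidiagonal_succ', sum_mul]
        simp [h, qBinomial_eq_zero_of_lt q m.lt_succ_self, pow_succ, mul_assoc]
      rw [← e, sum_antidiagonal_succ]
      simp [h]
    rw [prod_range_succ', pow_zero, one_mul, hq, mul_add, hw, sum_antidiagonal_succ, add_assoc,
      sum_mul, ← sum_add_distrib]
    congr 1
    · simp
    · refine sum_congr rfl fun p _ => ?_
      simp only [h, qBinomial_succ_succ, Nat.choose_succ_succ', Nat.choose_one_right]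
      ring

theorem qPochhammer_sq (n : ℕ) :
    qPochhammer (q ^ 2) n = (∏ j ∈ range n, (1 + q ^ (j + 1))) * qPochhammer q n := by
  rw [qPochhammer, qPochhammer, ← prod_mul_distrib]
  exact prod_congr rfl fun j _ => by ring

theorem prod_one_sub_odd_mul_qPochhammer_sq (n : ℕ) :
    (∏ i ∈ range n, (1 - q ^ (2 * i + 1))) * qPochhammer (q ^ 2) n = qPochhammer q (2 * n) := by
  induction n with
  | zero => simp [qPochhammer]
  | succ n ih =>
    rw [prod_range_succ, qPochhammer_succ, show 2 * (n + 1) = 2 * n + 1 + 1 by ring,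
      qPochhammer_succ, qPochhammer_succ, ← ih]
    ring

theorem pow_succ_dvd_qPochhammer_sub {a b : ℕ} (h : a ≤ b) :
    q ^ (a + 1) ∣ qPochhammer q b - qPochhammer q a := by
  rw [qPochhammer, qPochhammer, ← prod_range_mul_prod_Ico _ h, ← mul_sub_one]
  refine dvd_mul_of_dvd_right (dvd_prod_sub_one fun j hj => ?_) _
  rw [sub_sub_cancel_left, dvd_neg]
  exact pow_dvd_pow q (by simp at hj; omega)

theorem pow_succ_dvd_mul_qPochhammer_sub_one {x : R} {k l N : ℕ}
    (hx : x * qPochhammer q k * qPochhammer q l = qPochhammer q (k + l))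
    (hkl : k ≤ l) (hkN : k ≤ N) (hu : IsUnit (qPochhammer q k)) :
    q ^ (k + 1) ∣ x * qPochhammer q N - 1 := by
  -- Modulo `q ^ (k + 1)`, the factors `(q; q)ₗ`, `(q; q)ₖ₊ₗ` and `(q; q)_N` all agree with the
  -- unit `(q; q)ₖ`.
  have hl := pow_succ_dvd_qPochhammer_sub q hkl
  have hkl' := pow_succ_dvd_qPochhammer_sub q (k.le_add_right l)
  have hN := pow_succ_dvd_qPochhammer_sub q hkN
  have hxk : q ^ (k + 1) ∣ x * qPochhammer q k - 1 := by
    rw [← hu.dvd_mul_left]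
    have e : qPochhammer q k * (x * qPochhammer q k - 1) =
        x * qPochhammer q k * -(qPochhammer q l - qPochhammer q k) +
          (qPochhammer q (k + l) - qPochhammer q k) := by
      linear_combination hx
    rw [e]
    exact dvd_add (dvd_neg.mpr hl |>.mul_left _) hkl'
  rw [show x * qPochhammer q N - 1 =
    (x * qPochhammer q k - 1) + x * (qPochhammer q N - qPochhammer q k) by ring]
  exact dvd_add hxk (hN.mul_left x)

theorem sum_range_two_mul_add_two (n : ℕ) : ∑ j ∈ range n, (2 * j + 2) = n * (n + 1) := by
  have := sum_range_id_mul_two (n + 1)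
  rw [sum_range_succ', add_zero, Nat.add_sub_cancel, sum_mul] at this
  rw [mul_comm, ← this]
  exact sum_congr rfl fun j _ => by ring

theorem prod_range_two_mul_pow_sub_pow (x : R) (n : ℕ) :
    ∏ j ∈ range (2 * n), (x ^ (2 * n + 1) - x ^ (2 * j + 2)) =
      (-1) ^ n * x ^ (3 * n ^ 2 + 2 * n) * ∏ i ∈ range n, (1 - x ^ (2 * i + 1)) ^ 2 := by
  have pair : ∀ j ∈ range n, (x ^ (2 * n + 1) - x ^ (2 * j + 2)) *
      (x ^ (2 * n + 1) - x ^ (2 * (n + (n - 1 - j)) + 2)) =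
        -x ^ (2 * n + 1) * x ^ (2 * j + 2) * (1 - x ^ (2 * (n - 1 - j) + 1)) ^ 2 := by
    intro j hj
    have hj : j < n := mem_range.mp hj
    have h₁ : x ^ (2 * j + 2) * x ^ (2 * (n - 1 - j) + 1) = x ^ (2 * n + 1) := by
      rw [← pow_add]; congr 1; omega
    have h₂ : x ^ (2 * n + 1) * x ^ (2 * (n - 1 - j) + 1) = x ^ (2 * (n + (n - 1 - j)) + 2) := by
      rw [← pow_add]; congr 1; omega
    linear_combination (x ^ (2 * n + 1) * x ^ (2 * (n - 1 - j) + 1) - x ^ (2 * n + 1)) * h₁ +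
      (x ^ (2 * n + 1) - x ^ (2 * j + 2)) * h₂
  have split := prod_range_add (fun j => x ^ (2 * n + 1) - x ^ (2 * j + 2)) n n
  rw [← two_mul] at split
  rw [split, ← prod_range_reflect (fun j => _ - x ^ (2 * (n + j) + 2)),
    ← prod_mul_distrib, prod_congr rfl pair, prod_mul_distrib, prod_mul_distrib,
    prod_range_reflect (fun i => (1 - x ^ (2 * i + 1)) ^ 2), prod_const, card_range,
    prod_pow_eq_pow_sum, sum_range_two_mul_add_two, neg_pow, ← pow_mul]
  ring

end QBinomial

open Finset in
theorem sum_antidiagonal_two_mul_eq_sum_Icc {M : Type*} [AddCommMonoid M] (n : ℕ)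
    (f : ℕ × ℕ → M) :
    ∑ p ∈ antidiagonal (2 * n), f p =
      ∑ k ∈ Icc (-(n : ℤ)) n, f ((k + n).toNat, (n - k).toNat) := by
  have back : ∀ p ∈ antidiagonal (2 * n),
      ((((p.1 : ℤ) - n) + n).toNat, (n - ((p.1 : ℤ) - n)).toNat) = p := by
    rintro ⟨a, b⟩ h
    rw [HasAntidiagonal.mem_antidiagonal] at h
    ext <;> dsimp only <;> omega
  refine sum_nbij' (fun p => (p.1 : ℤ) - n) (fun k => ((k + n).toNat, (n - k).toNat))
    (fun p hp => ?_) (fun k hk => ?_) back (fun k hk => ?_)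
    (fun p hp => congrArg f (back p hp).symm)
  · simp only [HasAntidiagonal.mem_antidiagonal, mem_Icc] at hp ⊢; omega
  · simp only [HasAntidiagonal.mem_antidiagonal, mem_Icc] at hk ⊢; omega
  · simp only [mem_Icc] at hk; omega

theorem two_mul_choose_two_add (a : ℕ) : 2 * a.choose 2 + 2 * a = a * (a + 1) := by
  induction a with
  | zero => rfl
  | succ a ih => rw [Nat.choose_succ_succ', Nat.choose_one_right]; linarith

section PowerSeries

open Finset
open scoped PowerSeries.WithPiTopology

variable {R : Type*} [CommRing R]

theorem isUnit_qPochhammer {q : R⟦X⟧} (hq : constantCoeff q = 0) (n : ℕ) :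
    IsUnit (qPochhammer q n) := by
  simp [isUnit_iff_constantCoeff, qPochhammer, hq]

theorem coeff_eq_of_X_pow_dvd_sub {f g : R⟦X⟧} {N : ℕ} (h : X ^ (N + 1) ∣ f - g) :
    coeff N f = coeff N g := by
  rw [← sub_eq_zero, ← map_sub]
  exact X_pow_dvd_iff.mp h N N.lt_succ_self

theorem X_pow_dvd_sub_prod_of_hasProd [TopologicalSpace R] [T2Space R] {ι : Type*}
    {F : ι → R⟦X⟧} {G : R⟦X⟧} (hG : HasProd F G) {t : Finset ι} {n : ℕ}
    (hF : ∀ i ∉ t, X ^ n ∣ F i - 1) :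
    X ^ n ∣ G - ∏ i ∈ t, F i := by
  classical
  have htail : ∀ s, t ⊆ s → X ^ n ∣ ∏ i ∈ s, F i - ∏ i ∈ t, F i := fun s hs => by
    rw [← prod_sdiff hs, ← sub_one_mul]
    exact dvd_mul_of_dvd_left (dvd_prod_sub_one fun i hi => hF i (mem_sdiff.mp hi).2) _
  rw [X_pow_dvd_iff]
  intro d hd
  rw [map_sub, sub_eq_zero]
  refine tendsto_nhds_unique ((WithPiTopology.tendsto_iff_coeff_tendsto _ _ _ _).mp hG d)
    (tendsto_const_nhds.congr' ?_)
  filter_upwards [Filter.eventually_ge_atTop t] with s hs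
  have := X_pow_dvd_iff.mp (htail s hs) d hd
  rwa [map_sub, sub_eq_zero, eq_comm] at this

theorem one_add_tsum_smul_X_pow_mul_one_sub [TopologicalSpace R] [IsTopologicalRing R]
    [T2Space R] (c : R) {m : ℕ} (hm : m ≠ 0) :
    (1 + ∑' j, c • (X : R⟦X⟧) ^ (m * (j + 1))) * (1 - X ^ m) = 1 + C (c - 1) * X ^ m := by
  have h0 : constantCoeff ((X : R⟦X⟧) ^ m) = 0 := by simp [hm]
  have hsum : ∑' j, c • (X : R⟦X⟧) ^ (m * (j + 1)) = C c * X ^ m * ∑' j, (X ^ m) ^ j := by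
    rw [← (WithPiTopology.summable_pow_of_constantCoeff_eq_zero h0).tsum_mul_left]
    exact tsum_congr fun j => by rw [smul_eq_C_mul]; ring
  rw [hsum, add_mul, mul_assoc, WithPiTopology.tsum_pow_mul_one_sub_of_constantCoeff_eq_zero h0,
    map_sub, map_one]
  ring

end PowerSeries

section Gauss

open Finset

theorem sum_negOnePow_mul_X_pow_mul_qBinomial (n : ℕ) :
    ∑ k ∈ Icc (-(n : ℤ)) n,
        C (k.negOnePow : ℤ) * X ^ (k ^ 2).toNat *
          qBinomial (X ^ 2 : ℤ⟦X⟧) (2 * n) (k + n).toNat =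
      ∏ i ∈ range n, (1 - (X : ℤ⟦X⟧) ^ (2 * i + 1)) ^ 2 := by
  have hc : ((-1) ^ n * X ^ (3 * n ^ 2 + 2 * n) : ℤ⟦X⟧) ≠ 0 := by simp [X_ne_zero]
  refine mul_left_cancel₀ hc ?_
  have cauchy :=
    prod_add_pow_mul_eq_sum_antidiagonal (X ^ 2 : ℤ⟦X⟧) (X ^ (2 * n + 1)) (-X ^ 2) (2 * n)
  simp_rw [show ∀ j, (X : ℤ⟦X⟧) ^ (2 * n + 1) + (X ^ 2) ^ j * -X ^ 2 =
    X ^ (2 * n + 1) - X ^ (2 * j + 2) from fun j => by ring] at cauchy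
  rw [← prod_range_two_mul_pow_sub_pow, mul_sum, cauchy, sum_antidiagonal_two_mul_eq_sum_Icc]
  refine sum_congr rfl fun k hk => ?_
  rw [mem_Icc] at hk
  set a := (k + n).toNat
  set b := (n - k).toNat
  have ha : (a : ℤ) = k + n := Int.toNat_of_nonneg (by omega)
  have hb : (b : ℤ) = n - k := Int.toNat_of_nonneg (by omega)
  have hk2 : ((k ^ 2).toNat : ℤ) = k ^ 2 := Int.toNat_of_nonneg (sq_nonneg k)
  have hexp : 2 * a.choose 2 + 2 * a + (2 * n + 1) * b = (k ^ 2).toNat + (3 * n ^ 2 + 2 * n) := by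
    rw [two_mul_choose_two_add, ← Nat.cast_inj (R := ℤ)]
    push_cast [ha, hb, hk2]
    ring
  have hX : ((X : ℤ⟦X⟧) ^ 2) ^ a.choose 2 * (X ^ 2) ^ a * (X ^ (2 * n + 1)) ^ b =
      X ^ (k ^ 2).toNat * X ^ (3 * n ^ 2 + 2 * n) := by
    rw [← pow_mul, ← pow_mul, ← pow_mul, ← pow_add, ← pow_add, ← pow_add, hexp]
  have hsign : C (k.negOnePow : ℤ) = ((-1) ^ a * (-1) ^ n : ℤ⟦X⟧) := by
    rw [show k = a - n by omega, Int.negOnePow_sub, Units.val_mul, Int.coe_negOnePow_natCast,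
      Int.coe_negOnePow_natCast]
    simp
  have hsq : ((-1 : ℤ⟦X⟧) ^ n) ^ 2 = 1 := by rw [← pow_mul, pow_mul', neg_one_sq, one_pow]
  rw [neg_pow, hsign]
  linear_combination (-(-1) ^ a * qBinomial (X ^ 2 : ℤ⟦X⟧) (2 * n) a) * hX +
    ((-1) ^ a * qBinomial (X ^ 2 : ℤ⟦X⟧) (2 * n) a * X ^ (k ^ 2).toNat *
      X ^ (3 * n ^ 2 + 2 * n)) * hsq

noncomputable def truncTheta (N : ℕ) : ℤ⟦X⟧ :=
  ∑ k ∈ Icc (-(N : ℤ)) N, C (k.negOnePow : ℤ) * X ^ (k ^ 2).toNat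

theorem X_pow_dvd_X_pow_mul_qBinomial_mul_qPochhammer_sub_one {N : ℕ} {k : ℤ}
    (hk : k ∈ Icc (-(N : ℤ)) N) :
    X ^ (N + 1) ∣ X ^ (k ^ 2).toNat *
      (qBinomial (X ^ 2 : ℤ⟦X⟧) (2 * N) (k + N).toNat * qPochhammer (X ^ 2) N - 1) := by
  rw [mem_Icc] at hk
  set a := (k + N).toNat
  set b := (N - k).toNat
  have ha : (a : ℤ) = k + N := Int.toNat_of_nonneg (by omega)
  have hb : (b : ℤ) = N - k := Int.toNat_of_nonneg (by omega)
  have hk2 : ((k ^ 2).toNat : ℤ) = k ^ 2 := Int.toNat_of_nonneg (sq_nonneg k)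
  have hab : 2 * N = a + b := by omega
  have hx := qBinomial_add_mul_qPochhammer_mul_qPochhammer (X ^ 2 : ℤ⟦X⟧) a b
  have hu := isUnit_qPochhammer (q := (X ^ 2 : ℤ⟦X⟧)) (by simp)
  have hx' : qBinomial (X ^ 2 : ℤ⟦X⟧) (a + b) a * qPochhammer (X ^ 2) b *
      qPochhammer (X ^ 2) a = qPochhammer (X ^ 2) (b + a) := by
    rw [add_comm b a, ← hx]; ring
  obtain ⟨m, hdvd, hm⟩ : ∃ m, (X ^ 2 : ℤ⟦X⟧) ^ (m + 1) ∣
      qBinomial (X ^ 2) (2 * N) a * qPochhammer (X ^ 2) N - 1 ∧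
        N + 1 ≤ (k ^ 2).toNat + 2 * (m + 1) := by
    rw [hab]
    rcases le_total a b with h | h
    · refine ⟨a, pow_succ_dvd_mul_qPochhammer_sub_one _ hx h (by omega) (hu a), ?_⟩
      zify [hk2, ha]
      nlinarith
    · refine ⟨b, pow_succ_dvd_mul_qPochhammer_sub_one _ hx' h (by omega) (hu b), ?_⟩
      zify [hk2, hb]
      nlinarith
  rw [← pow_mul] at hdvd
  calc (X : ℤ⟦X⟧) ^ (N + 1) ∣ X ^ ((k ^ 2).toNat + 2 * (m + 1)) := pow_dvd_pow X hm
    _ ∣ _ := by rw [pow_add]; exact mul_dvd_mul_left _ hdvd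

theorem X_pow_dvd_truncTheta_sub (N : ℕ) :
    X ^ (N + 1) ∣ truncTheta N -
      qPochhammer (X ^ 2) N * (∏ i ∈ range N, (1 - (X : ℤ⟦X⟧) ^ (2 * i + 1))) ^ 2 := by
  rw [← prod_pow, ← sum_negOnePow_mul_X_pow_mul_qBinomial, mul_sum, truncTheta,
    ← sum_sub_distrib]
  refine dvd_sum fun k hk => ?_
  have e : C (k.negOnePow : ℤ) * X ^ (k ^ 2).toNat - qPochhammer (X ^ 2) N *
      (C (k.negOnePow : ℤ) * X ^ (k ^ 2).toNat * qBinomial (X ^ 2) (2 * N) (k + N).toNat) =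
      -C (k.negOnePow : ℤ) * (X ^ (k ^ 2).toNat *
        (qBinomial (X ^ 2 : ℤ⟦X⟧) (2 * N) (k + N).toNat * qPochhammer (X ^ 2) N - 1)) := by
    ring
  rw [e]
  exact (X_pow_dvd_X_pow_mul_qBinomial_mul_qPochhammer_sub_one hk).mul_left _

theorem X_pow_dvd_prod_one_sub_odd_mul_prod_one_add_sub_one (N : ℕ) :
    X ^ (N + 1) ∣ (∏ i ∈ range N, (1 - (X : ℤ⟦X⟧) ^ (2 * i + 1))) *
      (∏ j ∈ range N, (1 + X ^ (j + 1))) - 1 := by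
  rw [← (isUnit_qPochhammer (q := (X : ℤ⟦X⟧)) constantCoeff_X N).dvd_mul_left]
  have e : qPochhammer X N * ((∏ i ∈ range N, (1 - (X : ℤ⟦X⟧) ^ (2 * i + 1))) *
      (∏ j ∈ range N, (1 + X ^ (j + 1))) - 1) = qPochhammer X (2 * N) - qPochhammer X N := by
    rw [← prod_one_sub_odd_mul_qPochhammer_sq, qPochhammer_sq]
    ring
  rw [e]
  exact pow_succ_dvd_qPochhammer_sub X (by omega)

theorem X_pow_dvd_truncTheta_mul_sub (N : ℕ) :
    X ^ (N + 1) ∣ truncTheta N * ∏ n ∈ Icc 1 N, (1 + X ^ n) -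
      ∏ n ∈ Icc 1 N, (1 - X ^ n) := by
  rw [← qPochhammer_eq_prod_Icc, prod_Icc_one_eq_prod_range]
  set O := ∏ i ∈ range N, (1 - (X : ℤ⟦X⟧) ^ (2 * i + 1))
  set D := ∏ j ∈ range N, (1 + (X : ℤ⟦X⟧) ^ (j + 1))
  have hθ := X_pow_dvd_truncTheta_sub N
  have hOD := X_pow_dvd_prod_one_sub_odd_mul_prod_one_add_sub_one N
  have hOE : X ^ (N + 1) ∣ O * qPochhammer (X ^ 2) N - qPochhammer X N := by
    rw [prod_one_sub_odd_mul_qPochhammer_sq]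
    exact pow_succ_dvd_qPochhammer_sub X (by omega)
  have e : truncTheta N * D - qPochhammer X N =
      (truncTheta N - qPochhammer (X ^ 2) N * O ^ 2) * D +
        O * qPochhammer (X ^ 2) N * (O * D - 1) +
          (O * qPochhammer (X ^ 2) N - qPochhammer X N) := by
    ring
  rw [e]
  exact dvd_add (dvd_add (hθ.mul_right D) (hOD.mul_left _)) hOE

end Gauss

section Overpartition

open Finset
open scoped PowerSeries.WithPiTopology

theorem overpartitionSeries_eq_genFun :
    PowerSeries.mk (fun n => (overpartitionCount n : ℤ)) =
      Nat.Partition.genFun fun _ _ => (2 : ℤ) := by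
  ext n
  simp [overpartitionCount, Finsupp.prod, Multiset.toFinsupp_support]

theorem X_pow_dvd_overpartitionSeries_mul_sub (N : ℕ) :
    X ^ (N + 1) ∣ PowerSeries.mk (fun n => (overpartitionCount n : ℤ)) *
      ∏ n ∈ Icc 1 N, (1 - X ^ n) -
      ∏ n ∈ Icc 1 N, (1 + X ^ n) := by
  set F : ℕ → ℤ⟦X⟧ := fun i => 1 + ∑' j, (2 : ℤ) • X ^ ((i + 1) * (j + 1))
  have hF (i : ℕ) : F i * (1 - X ^ (i + 1)) = 1 + X ^ (i + 1) :=
    (one_add_tsum_smul_X_pow_mul_one_sub (2 : ℤ) i.succ_ne_zero).trans (by norm_num)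
  have hG : HasProd F (PowerSeries.mk fun n => (overpartitionCount n : ℤ)) := by
    rw [overpartitionSeries_eq_genFun]
    exact Nat.Partition.hasProd_genFun fun _ _ => (2 : ℤ)
  have hFtail : ∀ i ∉ range N, X ^ (N + 1) ∣ F i - 1 := fun i hi => by
    have hu : IsUnit (1 - X ^ (i + 1) : ℤ⟦X⟧) := by simp [isUnit_iff_constantCoeff]
    rw [← hu.dvd_mul_right, show (F i - 1) * (1 - X ^ (i + 1)) = 2 * X ^ (i + 1) by
      linear_combination hF i]
    exact (pow_dvd_pow X (by simp at hi; omega)).mul_left 2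
  have hprod :
      (∏ i ∈ range N, F i) * qPochhammer X N = ∏ j ∈ range N, (1 + X ^ (j + 1)) := by
    rw [qPochhammer, ← prod_mul_distrib]
    exact prod_congr rfl fun i _ => hF i
  rw [← qPochhammer_eq_prod_Icc, prod_Icc_one_eq_prod_range, ← hprod, ← sub_mul]
  exact (X_pow_dvd_sub_prod_of_hasProd hG hFtail).mul_right _

end Overpartition

open PowerSeries in
/-- The overpartition generating function: `∑ p̄(n) q^n = (∑_{n∈ℤ} (−1)^n q^{n²})⁻¹
= ∏_{n≥1} (1+q^n)/(1−q^n)`, stated coefficientwise with truncations. -/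
theorem overpartition_generating_function (N : ℕ) :
    coeff N ((mk fun n => (overpartitionCount n : ℤ))
          * ∑ k ∈ Finset.Icc (-(N : ℤ)) (N : ℤ),
              C (k.negOnePow : ℤ) * (X : PowerSeries ℤ) ^ (k ^ 2).toNat)
        = (if N = 0 then 1 else 0)
      ∧ coeff N ((mk fun n => (overpartitionCount n : ℤ))
          * ∏ n ∈ Finset.Icc 1 N, (1 - (X : PowerSeries ℤ) ^ n))
        = coeff N (∏ n ∈ Finset.Icc 1 N, (1 + (X : PowerSeries ℤ) ^ n)) := by
  set G := mk fun n => (overpartitionCount n : ℤ)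
  set Dplus := ∏ n ∈ Finset.Icc 1 N, (1 + (X : ℤ⟦X⟧) ^ n)
  set Dminus := ∏ n ∈ Finset.Icc 1 N, (1 - (X : ℤ⟦X⟧) ^ n)
  have hG : X ^ (N + 1) ∣ G * Dminus - Dplus := X_pow_dvd_overpartitionSeries_mul_sub N
  have hθ : X ^ (N + 1) ∣ truncTheta N * Dplus - Dminus := X_pow_dvd_truncTheta_mul_sub N
  have hu : IsUnit Dplus := by
    simp [Dplus, Finset.prod_Icc_one_eq_prod_range, isUnit_iff_constantCoeff]
  have hGθ : X ^ (N + 1) ∣ G * truncTheta N - 1 := by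
    rw [← hu.dvd_mul_left,
      show Dplus * (G * truncTheta N - 1) =
        G * (truncTheta N * Dplus - Dminus) + (G * Dminus - Dplus) by ring]
    exact dvd_add (hθ.mul_left G) hG
  exact ⟨(coeff_eq_of_X_pow_dvd_sub hGθ).trans (coeff_one N), coeff_eq_of_X_pow_dvd_sub hG⟩
end
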